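/- arXiv:2505.15587 — 4 statements merged into one kernel-verified Lean document; each statement's English description precedes it below -/
import Mathlib

section
/- Define Diff(n, c, t) = Σ_{k=0}^{n-1} (t^k / k!) · (e^{-t} − c^k · e^{-c·t}). Then for all c > 1, n ≥ 1, and t ≥ 0, Diff(n, c, t) ≥ 0. -/
/-!
Write `P n s = e^{-s} ∑_{k<n} s^k / k!`, the probability that a rate-one Poisson process has fewer
than `n` arrivals by time `s`. Since `(c t)^k e^{-c t} / k!` is the `k`-th term of `P n (c t)`, the
sum in question is `P n t - P n (c t)`. Differentiating, the partial sums telescope and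
`P' (m + 1) s = -e^{-s} s^m / m! ≤ 0`, so `P n` is antitone on `[0, ∞)`, and `t ≤ c t` finishes.
-/

open Finset Real

noncomputable def poissonLowerTail (n : ℕ) (s : ℝ) : ℝ :=
  exp (-s) * ∑ k ∈ range n, s ^ k / (k.factorial : ℝ)

lemma hasDerivAt_sum_range_succ_pow_div_factorial (m : ℕ) (s : ℝ) :
    HasDerivAt (fun s : ℝ => ∑ k ∈ range (m + 1), s ^ k / (k.factorial : ℝ))
      (∑ k ∈ range m, s ^ k / (k.factorial : ℝ)) s := by
  refine (HasDerivAt.fun_sum fun k _ => (hasDerivAt_pow k s).div_const _).congr_deriv ?_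
  rw [sum_range_succ']
  simp only [Nat.cast_zero, zero_mul, zero_div, add_zero, Nat.add_sub_cancel]
  refine sum_congr rfl fun k _ => ?_
  rw [Nat.factorial_succ, Nat.cast_mul]
  field_simp

lemma hasDerivAt_poissonLowerTail_succ (m : ℕ) (s : ℝ) :
    HasDerivAt (poissonLowerTail (m + 1)) (-(exp (-s) * (s ^ m / (m.factorial : ℝ)))) s := by
  have hexp : HasDerivAt (fun s : ℝ => exp (-s)) (-exp (-s)) s := by
    simpa using (hasDerivAt_neg s).exp
  refine (hexp.mul (hasDerivAt_sum_range_succ_pow_div_factorial m s)).congr_deriv ?_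
  rw [sum_range_succ]
  ring

lemma antitoneOn_poissonLowerTail (n : ℕ) : AntitoneOn (poissonLowerTail n) (Set.Ici 0) := by
  cases n with
  | zero => simp [AntitoneOn, poissonLowerTail]
  | succ m =>
    have hderiv := hasDerivAt_poissonLowerTail_succ m
    refine antitoneOn_of_deriv_nonpos (convex_Ici 0)
      (fun x _ => (hderiv x).continuousAt.continuousWithinAt)
      (fun x _ => (hderiv x).differentiableAt.differentiableWithinAt) fun x hx => ?_
    rw [interior_Ici, Set.mem_Ioi] at hx
    rw [(hderiv x).deriv, neg_nonpos]
    positivity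

lemma sum_pow_div_factorial_mul_exp_sub (n : ℕ) (c t : ℝ) :
    ∑ k ∈ range n, t ^ k / (k.factorial : ℝ) * (exp (-t) - c ^ k * exp (-c * t)) =
      poissonLowerTail n t - poissonLowerTail n (c * t) := by
  simp only [poissonLowerTail, mul_sum, ← sum_sub_distrib, mul_pow, neg_mul]
  refine sum_congr rfl fun k _ => ?_
  ring

theorem stmt_2_general (n : ℕ) (c t : ℝ) (hc : 1 < c) (ht : 0 ≤ t) :
    0 ≤ ∑ k ∈ Finset.range n,
          t ^ k / (Nat.factorial k : ℝ) * (Real.exp (-t) - c ^ k * Real.exp (-c * t)) := by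
  have hct : t ≤ c * t := le_mul_of_one_le_left ht hc.le
  rw [sum_pow_div_factorial_mul_exp_sub, sub_nonneg]
  exact antitoneOn_poissonLowerTail n ht (ht.trans hct) hct

theorem stmt_2 (n : ℕ) (hn : 1 ≤ n) (c t : ℝ) (hc : 1 < c) (ht : 0 ≤ t) :
    0 ≤ ∑ k ∈ Finset.range n,
          t ^ k / (Nat.factorial k : ℝ) * (Real.exp (-t) - c ^ k * Real.exp (-c * t)) :=
  stmt_2_general n c t hc ht
end

section
/- Define Diff(n, c, t) = Σ_{k=0}^{n-1} (t^k / k!) · (e^{-t} − c^k · e^{-c·t}) for c > 1 and n ≥ 1. Then Diff(n, c, ·) attains its global maximum on [0, ∞) at t* = n · ln(c) / (c − 1), i.e., Diff(n, c, t) ≤ Diff(n, c, t*) for all t ≥ 0. -/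
/-!
The sum equals `P(t) - P(c t)`, where `P(x) = e^{-x} ∑_{k<n} x^k / k!` is the probability that a
Poisson variable of mean `x` is below `n`. Since `P'(x) = -e^{-x} x^{n-1} / (n-1)!`, the derivative
of `t ↦ P(t) - P(c t)` is `t^{n-1} / (n-1)! · (e^{n log c - c t} - e^{-t})`, which is nonnegative
for `0 ≤ t ≤ t*` and nonpositive for `t ≥ t*`.
-/

open Real Finset Set
open scoped Nat

noncomputable def poissonCdf (n : ℕ) (x : ℝ) : ℝ :=
  (∑ k ∈ range n, x ^ k / k !) * exp (-x)

lemma hasDerivAt_sum_range_pow_div_factorial (m : ℕ) (x : ℝ) :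
    HasDerivAt (fun x : ℝ => ∑ k ∈ range (m + 1), x ^ k / k !) (∑ k ∈ range m, x ^ k / k !) x := by
  induction m with
  | zero => simpa using hasDerivAt_const x (1 : ℝ)
  | succ m ih =>
    simp only [sum_range_succ _ (m + 1)]
    refine ih.add ((hasDerivAt_pow (m + 1) x).div_const _) |>.congr_deriv ?_
    rw [sum_range_succ, Nat.factorial_succ]
    push_cast
    field_simp

lemma hasDerivAt_poissonCdf_succ (m : ℕ) (x : ℝ) :
    HasDerivAt (poissonCdf (m + 1)) (-(x ^ m / m ! * exp (-x))) x := by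
  refine (hasDerivAt_sum_range_pow_div_factorial m x).mul (hasDerivAt_neg x).exp
    |>.congr_deriv ?_
  rw [sum_range_succ]
  ring

lemma sum_pow_div_factorial_mul_exp_neg_sub_eq (n : ℕ) (c t : ℝ) :
    ∑ k ∈ range n, t ^ k / k ! * (exp (-t) - c ^ k * exp (-c * t))
      = poissonCdf n t - poissonCdf n (c * t) := by
  simp only [poissonCdf, sum_mul, ← sum_sub_distrib, mul_pow, neg_mul]
  refine sum_congr rfl fun k _ => ?_
  ring

lemma hasDerivAt_poissonCdf_sub_comp_mul (m : ℕ) (c s : ℝ) :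
    HasDerivAt (fun s => poissonCdf (m + 1) s - poissonCdf (m + 1) (c * s))
      (s ^ m / m ! * (c ^ (m + 1) * exp (-(c * s)) - exp (-s))) s := by
  have hscaled := (hasDerivAt_poissonCdf_succ m (c * s)).comp s ((hasDerivAt_id s).const_mul c)
  refine (hasDerivAt_poissonCdf_succ m s).sub hscaled |>.congr_deriv ?_
  simp only [mul_pow, pow_succ]
  ring

lemma pow_mul_exp_neg_mul_eq {c : ℝ} (hc : 0 < c) (n : ℕ) (s : ℝ) :
    c ^ n * exp (-(c * s)) = exp (n * log c - c * s) := by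
  rw [← exp_log hc, ← exp_nat_mul, ← exp_add, exp_log hc, sub_eq_add_neg]

lemma isMaxOn_poissonCdf_sub_comp_mul (m : ℕ) {c : ℝ} (hc : 1 < c) :
    IsMaxOn (fun s => poissonCdf (m + 1) s - poissonCdf (m + 1) (c * s)) (Ici 0)
      (((m + 1 : ℕ) : ℝ) * log c / (c - 1)) := by
  have hder := hasDerivAt_poissonCdf_sub_comp_mul m c
  have hc₀ : 0 < c := zero_lt_one.trans hc
  have hc₁ : 0 < c - 1 := sub_pos.2 hc
  have hτ : 0 ≤ ((m + 1 : ℕ) : ℝ) * log c / (c - 1) :=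
    div_nonneg (mul_nonneg (Nat.cast_nonneg _) (log_nonneg hc.le)) hc₁.le
  have hdiff : Differentiable ℝ (fun s => poissonCdf (m + 1) s - poissonCdf (m + 1) (c * s)) :=
    fun s => (hder s).differentiableAt
  refine isMaxOn_Ici_of_deriv hdiff.continuous.continuousAt hdiff.continuous.continuousAt
    hdiff.differentiableOn hdiff.differentiableOn (fun s hs => ?_) (fun s hs => ?_)
  · rw [(hder s).deriv]
    refine mul_nonneg (by have := hs.1.le; positivity) (sub_nonneg.2 ?_)
    rw [pow_mul_exp_neg_mul_eq hc₀, exp_le_exp]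
    have := (le_div_iff₀ hc₁).1 hs.2.le
    linarith
  · rw [(hder s).deriv]
    refine mul_nonpos_of_nonneg_of_nonpos (by have := hτ.trans hs.out.le; positivity)
      (sub_nonpos.2 ?_)
    rw [pow_mul_exp_neg_mul_eq hc₀, exp_le_exp]
    have := (div_le_iff₀ hc₁).1 hs.out.le
    linarith

theorem stmt_4_general (n : ℕ) (c : ℝ) (hc : 1 < c) (t : ℝ) (ht : 0 ≤ t) :
    ∑ k ∈ Finset.range n,
        t ^ k / (Nat.factorial k : ℝ) * (Real.exp (-t) - c ^ k * Real.exp (-c * t))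
      ≤ ∑ k ∈ Finset.range n,
          (n * Real.log c / (c - 1)) ^ k / (Nat.factorial k : ℝ) *
            (Real.exp (-(n * Real.log c / (c - 1))) -
              c ^ k * Real.exp (-c * (n * Real.log c / (c - 1)))) := by
  simp only [sum_pow_div_factorial_mul_exp_neg_sub_eq]
  cases n with
  | zero => simp [poissonCdf]
  | succ m => exact isMaxOn_poissonCdf_sub_comp_mul m hc ht

theorem stmt_4 (n : ℕ) (hn : 1 ≤ n) (c : ℝ) (hc : 1 < c) (t : ℝ) (ht : 0 ≤ t) :
    ∑ k ∈ Finset.range n,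
        t ^ k / (Nat.factorial k : ℝ) * (Real.exp (-t) - c ^ k * Real.exp (-c * t))
      ≤ ∑ k ∈ Finset.range n,
          (n * Real.log c / (c - 1)) ^ k / (Nat.factorial k : ℝ) *
            (Real.exp (-(n * Real.log c / (c - 1))) -
              c ^ k * Real.exp (-c * (n * Real.log c / (c - 1)))) :=
  stmt_4_general n c hc t ht
end

section
/- Let c = e^δ with δ > 0, let t > 0, and set N = ⌈(e^δ − 1)·t/δ⌉. Define Diff(n, c, t) = Σ_{k=0}^{n-1} (t^k/k!)·(e^{-t} − c^k·e^{-c·t}). Then for all natural numbers n, Diff(n, c, t) ≤ Diff(N, c, t), i.e., the maximum over n of Diff(n, c, t) is attained at n = N. -/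
open Real Finset

/- The `k`-th term changes sign exactly once: `e^{-t} - c^k e^{-ct} = e^{-t} (1 - e^{kδ - (c - 1)t})`
is nonnegative iff `kδ ≤ (c - 1)t`, i.e. iff `k ≤ (e^δ - 1)t/δ`. A sum of terms that are nonnegative
up to `N` and nonpositive afterwards is largest when truncated at `N`. -/

theorem Finset.sum_range_le_sum_range_of_nonneg_of_nonpos {M : Type*} [AddCommGroup M]
    [PartialOrder M] [IsOrderedAddMonoid M] {f : ℕ → M} {N : ℕ}
    (hpos : ∀ k < N, 0 ≤ f k) (hneg : ∀ k, N ≤ k → f k ≤ 0) (n : ℕ) :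
    ∑ k ∈ range n, f k ≤ ∑ k ∈ range N, f k := by
  rcases le_total n N with hnN | hNn
  · exact sum_le_sum_of_subset_of_nonneg (range_subset_range.mpr hnN)
      fun k hk _ => hpos k (mem_range.mp hk)
  · rw [← sum_range_add_sum_Ico f hNn]
    exact add_le_of_nonpos_right <| sum_nonpos fun k hk => hneg k (mem_Ico.mp hk).1

theorem exp_pow_mul_exp_neg_mul (δ t : ℝ) (k : ℕ) :
    exp δ ^ k * exp (-exp δ * t) = exp (k * δ - exp δ * t) := by
  rw [← exp_nat_mul, ← exp_add, sub_eq_add_neg, neg_mul]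

theorem exp_neg_sub_exp_pow_mul_nonneg {δ t : ℝ} {k : ℕ} (h : k * δ ≤ (exp δ - 1) * t) :
    0 ≤ exp (-t) - exp δ ^ k * exp (-exp δ * t) := by
  rw [exp_pow_mul_exp_neg_mul, sub_nonneg, exp_le_exp]
  linarith

theorem exp_neg_sub_exp_pow_mul_nonpos {δ t : ℝ} {k : ℕ} (h : (exp δ - 1) * t ≤ k * δ) :
    exp (-t) - exp δ ^ k * exp (-exp δ * t) ≤ 0 := by
  rw [exp_pow_mul_exp_neg_mul, sub_nonpos, exp_le_exp]
  linarith

theorem stmt_6 (δ t : ℝ) (hδ : 0 < δ) (ht : 0 < t) (n : ℕ) :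
    ∑ k ∈ Finset.range n,
        t ^ k / (Nat.factorial k : ℝ) *
          (Real.exp (-t) - Real.exp δ ^ k * Real.exp (-(Real.exp δ) * t))
      ≤ ∑ k ∈ Finset.range ⌈(Real.exp δ - 1) * t / δ⌉₊,
          t ^ k / (Nat.factorial k : ℝ) *
            (Real.exp (-t) - Real.exp δ ^ k * Real.exp (-(Real.exp δ) * t)) := by
  have hcoef (k : ℕ) : 0 ≤ t ^ k / (k.factorial : ℝ) := by positivity
  refine sum_range_le_sum_range_of_nonneg_of_nonpos (fun k hk => ?_) (fun k hk => ?_) n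
  · rw [Nat.lt_ceil, lt_div_iff₀ hδ] at hk
    exact mul_nonneg (hcoef k) (exp_neg_sub_exp_pow_mul_nonneg hk.le)
  · rw [Nat.ceil_le, div_le_iff₀ hδ] at hk
    exact mul_nonpos_of_nonneg_of_nonpos (hcoef k) (exp_neg_sub_exp_pow_mul_nonpos hk)
end

section
/- Let E_n be the Erlang CTMC with n transient states and rate 1, and E'_n = c·E_n its acceleration by c ≥ 1 (all rates multiplied by c). Then Pr^{E_n}(◊^{≤t} g) − Pr^{E'_n}(◊^{≤t} g) in absolute value equals Σ_{i=0}^{n-1} (t^i/i!)·e^{-t} · (1 − Σ_{j=0}^{n-i-1} ((t·(c-1))^j / j!) · e^{-t·(c-1)}), and this equals Σ_{k=0}^{n-1} (t^k/k!)·(e^{-t} − c^k·e^{-c·t}). -/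
/-!
The `k`-th summand `t^k/k! · (e^{-t} - c^k e^{-ct})` is the difference of the Poisson weights
`P(Poisson(t) = k) - P(Poisson(ct) = k)`. Writing `ct = t + s` with `s = t(c-1) ≥ 0`, the
Poisson(`ct`) weights are the convolution of the Poisson(`t`) and Poisson(`s`) weights (binomial
theorem), and regrouping the double sum along its anti-diagonals turns the double-sum expression
into the closed form. Each factor `1 - P(Poisson(s) < n - i)` of the double sum is nonnegative,
which removes the absolute value.
-/

open Finset Real Nat

noncomputable def poissonWeight (x : ℝ) (k : ℕ) : ℝ := x ^ k / k ! * exp (-x)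

theorem poissonWeight_def (x : ℝ) (k : ℕ) : poissonWeight x k = x ^ k / k ! * exp (-x) := rfl

theorem poissonWeight_nonneg {x : ℝ} (hx : 0 ≤ x) (k : ℕ) : 0 ≤ poissonWeight x k := by
  unfold poissonWeight; positivity

theorem sum_range_poissonWeight_le_one {x : ℝ} (hx : 0 ≤ x) (n : ℕ) :
    ∑ k ∈ range n, poissonWeight x k ≤ 1 :=
  calc ∑ k ∈ range n, poissonWeight x k = (∑ k ∈ range n, x ^ k / k !) * exp (-x) := by
        rw [sum_mul]; rfl
    _ ≤ exp x * exp (-x) := by gcongr; exact sum_le_exp_of_nonneg hx n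
    _ = 1 := by rw [← exp_add, add_neg_cancel, exp_zero]

theorem sum_range_succ_pow_div_factorial_mul {K : Type*} [Field K] [CharZero K] (x y : K)
    (m : ℕ) :
    ∑ k ∈ range (m + 1), x ^ k / k ! * (y ^ (m - k) / (m - k)!) = (x + y) ^ m / m ! := by
  rw [add_pow, sum_div]
  refine sum_congr rfl fun k hk => ?_
  have hkm : k ≤ m := Nat.lt_succ_iff.mp (mem_range.mp hk)
  have hchoose : (m.choose k : K) ≠ 0 := Nat.cast_ne_zero.mpr (Nat.choose_pos hkm).ne'
  rw [← Nat.choose_mul_factorial_mul_factorial hkm]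
  push_cast
  field_simp

theorem sum_range_succ_poissonWeight_mul (x y : ℝ) (m : ℕ) :
    ∑ k ∈ range (m + 1), poissonWeight x k * poissonWeight y (m - k) =
      poissonWeight (x + y) m := by
  rw [poissonWeight_def (x + y), ← sum_range_succ_pow_div_factorial_mul, sum_mul, neg_add,
    exp_add]
  refine sum_congr rfl fun k _ => ?_
  simp only [poissonWeight_def]
  ring

theorem sum_range_mul_one_sub_sum_range {R : Type*} [CommRing R] (a b : ℕ → R) (n : ℕ) :
    ∑ i ∈ range n, a i * (1 - ∑ j ∈ range (n - i), b j) =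
      ∑ m ∈ range n, (a m - ∑ k ∈ range (m + 1), a k * b (m - k)) := by
  simp only [mul_sub, mul_one, mul_sum, sum_sub_distrib]
  rw [sum_range_diag_flip n fun i j => a i * b j]

theorem sum_poissonWeight_mul_one_sub (x y : ℝ) (n : ℕ) :
    ∑ i ∈ range n, poissonWeight x i * (1 - ∑ j ∈ range (n - i), poissonWeight y j) =
      ∑ k ∈ range n, (poissonWeight x k - poissonWeight (x + y) k) := by
  simp only [sum_range_mul_one_sub_sum_range, sum_range_succ_poissonWeight_mul]

theorem pow_div_factorial_mul_exp_sub (c x : ℝ) (k : ℕ) :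
    x ^ k / k ! * (exp (-x) - c ^ k * exp (-c * x)) =
      poissonWeight x k - poissonWeight (c * x) k := by
  simp only [poissonWeight_def, mul_pow, neg_mul]
  ring

/-- `Pr^{E_n}(◊^{≤t} g) = P(Poisson(t) ≥ n) = 1 - Σ_{k<n} (t^k/k!)e^{-t}` and
`Pr^{E'_n}(◊^{≤t} g) = P(Poisson(c·t) ≥ n)`; the absolute difference equals both
the double-sum expression and the closed form. -/
theorem stmt_12 (n : ℕ) (c t : ℝ) (hc : 1 ≤ c) (ht : 0 ≤ t) :
    |(1 - ∑ k ∈ Finset.range n, t ^ k / (Nat.factorial k : ℝ) * Real.exp (-t)) -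
        (1 - ∑ k ∈ Finset.range n, (c * t) ^ k / (Nat.factorial k : ℝ) * Real.exp (-(c * t)))|
      = ∑ i ∈ Finset.range n,
          t ^ i / (Nat.factorial i : ℝ) * Real.exp (-t) *
            (1 - ∑ j ∈ Finset.range (n - i),
              (t * (c - 1)) ^ j / (Nat.factorial j : ℝ) * Real.exp (-(t * (c - 1))))
    ∧ |(1 - ∑ k ∈ Finset.range n, t ^ k / (Nat.factorial k : ℝ) * Real.exp (-t)) -
        (1 - ∑ k ∈ Finset.range n, (c * t) ^ k / (Nat.factorial k : ℝ) * Real.exp (-(c * t)))|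
      = ∑ k ∈ Finset.range n,
          t ^ k / (Nat.factorial k : ℝ) * (Real.exp (-t) - c ^ k * Real.exp (-c * t)) := by
  simp only [← poissonWeight_def, pow_div_factorial_mul_exp_sub]
  have hs : 0 ≤ t * (c - 1) := mul_nonneg ht (sub_nonneg.mpr hc)
  have hdouble := sum_poissonWeight_mul_one_sub t (t * (c - 1)) n
  rw [show t + t * (c - 1) = c * t by ring] at hdouble
  have hnonneg : 0 ≤ ∑ i ∈ range n,
      poissonWeight t i * (1 - ∑ j ∈ range (n - i), poissonWeight (t * (c - 1)) j) :=
    sum_nonneg fun i _ => mul_nonneg (poissonWeight_nonneg ht i)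
      (sub_nonneg.mpr (sum_range_poissonWeight_le_one hs _))
  have habs : |(1 - ∑ k ∈ range n, poissonWeight t k) -
      (1 - ∑ k ∈ range n, poissonWeight (c * t) k)| =
        ∑ k ∈ range n, (poissonWeight t k - poissonWeight (c * t) k) := by
    rw [sub_sub_sub_cancel_left, abs_sub_comm, ← sum_sub_distrib, ← hdouble,
      abs_of_nonneg hnonneg]
  rw [hdouble]
  exact ⟨habs, habs⟩
end
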